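/- arXiv:2212.02957 — 2 statements merged into one kernel-verified Lean document; each statement's English description precedes it below -/
import Mathlib

section
/- Let T be a finite tree on n vertices. The hairing H(T) is palindromic if and only if n is even, and H(T) is antipalindromic if and only if n is odd. -/
open Polynomial

/-- The characteristic polynomial (of the adjacency matrix) of a finite simple graph. -/
noncomputable def charPoly {V : Type*} [Finite V] (G : SimpleGraph V) : Polynomial ℤ :=
  letI := Fintype.ofFinite V
  letI := Classical.decEq V
  letI := Classical.decRel G.Adj
  (SimpleGraph.adjMatrix ℤ G).charpoly

/-- `G` is palindromic: writing `χ_G(λ) = Σ a_i λ^(n-i)`, we have `a_i = a_(n-i)`;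
equivalently the `i`-th and `(n-i)`-th coefficients agree for all `i ≤ n`. -/
def IsPalindromic {V : Type*} [Finite V] (G : SimpleGraph V) : Prop :=
  ∀ i ≤ Nat.card V, (charPoly G).coeff i = (charPoly G).coeff (Nat.card V - i)

/-- `G` is antipalindromic: writing `χ_G(λ) = Σ a_i λ^(n-i)`, we have `a_i = -a_(n-i)`. -/
def IsAntipalindromic {V : Type*} [Finite V] (G : SimpleGraph V) : Prop :=
  ∀ i ≤ Nat.card V, (charPoly G).coeff i = -(charPoly G).coeff (Nat.card V - i)

/-- The hairing of `G`: attach a pendant vertex to every vertex of `G`.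
Vertices `(u, false)` form the original graph and `(u, true)` is the pendant at `u`. -/
def hairing {V : Type*} (G : SimpleGraph V) : SimpleGraph (V × Bool) where
  Adj a b := (a.2 = false ∧ b.2 = false ∧ G.Adj a.1 b.1) ∨ (a.1 = b.1 ∧ a.2 ≠ b.2)
  symm := by
    constructor
    rintro a b (⟨ha, hb, hadj⟩ | ⟨h1, h2⟩)
    · exact Or.inl ⟨hb, ha, hadj.symm⟩
    · exact Or.inr ⟨h1.symm, h2.symm⟩
  loopless := by
    constructor
    rintro a (⟨_, _, hadj⟩ | ⟨_, h⟩)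
    · exact G.irrefl hadj
    · exact h rfl

/-! With `A` the adjacency matrix of `G`, the hairing of `G` has adjacency matrix
`B = [[A, 1], [1, 0]]` up to reindexing. `B` is invertible with inverse `[[0, 1], [1, -A]]` and
`det B = (-1)^n`, so the reversed characteristic polynomial `det (1 - X B)` is `(-1)^n χ_{B⁻¹}`.
If `G` is bipartite (e.g. a tree), the diagonal sign matrix `D` of a 2-colouring satisfies
`D A D = -A`, and conjugation by `[[0, D], [D, 0]]` carries `B` to `B⁻¹`;
hence `rev χ = (-1)^n χ`.
Comparing the constant and leading coefficients of the monic `χ` then forces the parities. -/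

open Matrix

namespace Matrix

variable {m R : Type*} [Fintype m] [DecidableEq m] [CommRing R]

theorem charpolyRev_eq_of_mul_eq_one {M N : Matrix m m R} (h : M * N = 1) :
    M.charpolyRev = (-1) ^ Fintype.card m * C M.det * N.charpoly := by
  have hdet : IsUnit M.det := isUnit_det_of_right_inverse h
  rw [← inv_eq_right_inv h, charpoly_inv M ((isUnit_iff_isUnit_det M).mpr hdet), ← mul_assoc,
    mul_mul_mul_comm, ← map_mul, Ring.mul_inverse_cancel _ hdet, ← mul_pow]
  simp

theorem det_fromBlocks_one_one_zero (A : Matrix m m R) :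
    (fromBlocks A 1 1 (0 : Matrix m m R)).det = (-1) ^ Fintype.card m := by
  have h : fromBlocks A 1 1 (0 : Matrix m m R) * fromBlocks 1 0 (1 - A) 1 =
      fromBlocks (1 : Matrix m m R) 1 1 0 := by
    simp [fromBlocks_multiply]
  have hdet_one : (fromBlocks (1 : Matrix m m R) 0 (1 - A) 1).det = 1 := by simp
  rw [← mul_one (det _), ← hdet_one, ← det_mul, h, det_fromBlocks_one₁₁]
  simp [det_neg]

theorem fromBlocks_one_one_zero_mul_fromBlocks_zero_one_one_neg (A : Matrix m m R) :
    fromBlocks A 1 1 (0 : Matrix m m R) * fromBlocks (0 : Matrix m m R) 1 1 (-A) = 1 := by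
  simp [fromBlocks_multiply, ← fromBlocks_one]

theorem charpoly_fromBlocks_zero_one_one_neg {A D : Matrix m m R} (hD : D * D = 1)
    (hA : D * A * D = -A) :
    (fromBlocks (0 : Matrix m m R) 1 1 (-A)).charpoly =
      (fromBlocks A 1 1 (0 : Matrix m m R)).charpoly := by
  set P := fromBlocks (0 : Matrix m m R) D D 0
  have hconj : P * (fromBlocks A 1 1 0 * P) = fromBlocks (0 : Matrix m m R) 1 1 (-A) := by
    simp [P, fromBlocks_multiply, hD, ← hA, Matrix.mul_assoc]
  rw [← hconj, charpoly_mul_comm, Matrix.mul_assoc]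
  simp [P, fromBlocks_multiply, hD]

theorem charpolyRev_fromBlocks_one_one_zero {A D : Matrix m m R} (hD : D * D = 1)
    (hA : D * A * D = -A) :
    (fromBlocks A 1 1 (0 : Matrix m m R)).charpolyRev =
      C ((-1) ^ Fintype.card m) * (fromBlocks A 1 1 (0 : Matrix m m R)).charpoly := by
  rw [charpolyRev_eq_of_mul_eq_one (fromBlocks_one_one_zero_mul_fromBlocks_zero_one_one_neg A),
    charpoly_fromBlocks_zero_one_one_neg hD hA, det_fromBlocks_one_one_zero]
  simp [Fintype.card_sum, ← two_mul, pow_mul]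

end Matrix

namespace Polynomial

variable {R : Type*} [CommRing R] {p : R[X]} {c : R}

theorem coeff_natDegree_sub_of_reverse_eq (h : p.reverse = C c * p) {i : ℕ}
    (hi : i ≤ p.natDegree) : p.coeff (p.natDegree - i) = c * p.coeff i := by
  rw [← coeff_C_mul, ← h, coeff_reverse, revAt_le hi]

theorem Monic.mul_coeff_zero_of_reverse_eq (hp : p.Monic) (h : p.reverse = C c * p) :
    c * p.coeff 0 = 1 := by
  rw [← coeff_C_mul, ← h, coeff_zero_reverse, hp.leadingCoeff]

theorem Monic.palindromic_iff_even_of_reverse_eq (hR : (-1 : R) ≠ 1) (hp : p.Monic) {k : ℕ}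
    (h : p.reverse = C ((-1) ^ k) * p) :
    (∀ i ≤ p.natDegree, p.coeff i = p.coeff (p.natDegree - i)) ↔ Even k := by
  refine ⟨fun hpal => ?_, fun hk i hi => ?_⟩
  · have hcoeff_zero := hpal 0 (Nat.zero_le _)
    rw [Nat.sub_zero, hp.coeff_natDegree] at hcoeff_zero
    have hsign := hp.mul_coeff_zero_of_reverse_eq h
    rwa [hcoeff_zero, mul_one, neg_one_pow_eq_one_iff_even hR] at hsign
  · rw [coeff_natDegree_sub_of_reverse_eq h hi, hk.neg_one_pow, one_mul]

theorem Monic.antipalindromic_iff_odd_of_reverse_eq (hR : (-1 : R) ≠ 1) (hp : p.Monic) {k : ℕ}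
    (h : p.reverse = C ((-1) ^ k) * p) :
    (∀ i ≤ p.natDegree, p.coeff i = -p.coeff (p.natDegree - i)) ↔ Odd k := by
  refine ⟨fun hanti => ?_, fun hk i hi => ?_⟩
  · have hcoeff_zero := hanti 0 (Nat.zero_le _)
    rw [Nat.sub_zero, hp.coeff_natDegree] at hcoeff_zero
    have hsign := hp.mul_coeff_zero_of_reverse_eq h
    rwa [hcoeff_zero, mul_neg_one, neg_eq_iff_eq_neg, neg_one_pow_eq_neg_one_iff_odd hR] at hsign
  · rw [coeff_natDegree_sub_of_reverse_eq h hi, hk.neg_one_pow, neg_one_mul, neg_neg]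

end Polynomial

namespace SimpleGraph

variable {V : Type*}

theorem charPoly_eq_charpoly [Fintype V] [DecidableEq V] (G : SimpleGraph V)
    [DecidableRel G.Adj] :
    charPoly G = (G.adjMatrix ℤ).charpoly := by
  unfold charPoly
  congr!

theorem charPoly_monic [Finite V] (G : SimpleGraph V) : (charPoly G).Monic := by
  classical
  have := Fintype.ofFinite V
  rw [charPoly_eq_charpoly]
  exact charpoly_monic _

theorem natDegree_charPoly [Finite V] (G : SimpleGraph V) :
    (charPoly G).natDegree = Nat.card V := by
  classical
  have := Fintype.ofFinite V
  rw [charPoly_eq_charpoly, charpoly_natDegree_eq_dim, Nat.card_eq_fintype_card]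

theorem IsBipartite.exists_conj_adjMatrix_eq_neg (R : Type*) [CommRing R] [Fintype V]
    [DecidableEq V] {G : SimpleGraph V} [DecidableRel G.Adj] (hG : G.IsBipartite) :
    ∃ D : Matrix V V R, D * D = 1 ∧ D * G.adjMatrix R * D = -G.adjMatrix R := by
  obtain ⟨c⟩ := hG
  refine ⟨diagonal fun v => if c v = 0 then 1 else -1, ?_, ?_⟩
  · rw [diagonal_mul_diagonal, ← diagonal_one]
    congr 1
    ext v
    split_ifs <;> simp
  · ext u v
    simp only [diagonal_mul, mul_diagonal, adjMatrix_apply]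
    by_cases huv : G.Adj u v
    · have hne : c u ≠ c v := c.valid huv
      revert hne
      generalize c u = a
      generalize c v = b
      fin_cases a <;> fin_cases b <;> simp [huv]
    · simp [huv]

theorem adjMatrix_hairing (R : Type*) [Zero R] [One R] [DecidableEq V] (G : SimpleGraph V)
    [DecidableRel G.Adj] [DecidableRel (hairing G).Adj] :
    (hairing G).adjMatrix R =
      (fromBlocks (G.adjMatrix R) 1 1 0).submatrix
        ((Equiv.prodComm V Bool).trans (Equiv.boolProdEquivSum V))
        ((Equiv.prodComm V Bool).trans (Equiv.boolProdEquivSum V)) := by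
  ext ⟨u, _ | _⟩ ⟨v, _ | _⟩ <;>
    simp only [adjMatrix_apply] <;> simp [hairing, one_apply]

theorem charPoly_hairing [Fintype V] [DecidableEq V] (G : SimpleGraph V) [DecidableRel G.Adj] :
    charPoly (hairing G) = (fromBlocks (G.adjMatrix ℤ) 1 1 (0 : Matrix V V ℤ)).charpoly := by
  classical
  rw [charPoly_eq_charpoly, adjMatrix_hairing,
    ← charpoly_reindex ((Equiv.prodComm V Bool).trans (Equiv.boolProdEquivSum V)).symm,
    reindex_apply, Equiv.symm_symm]

theorem IsBipartite.reverse_charPoly_hairing [Finite V] {G : SimpleGraph V}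
    (hG : G.IsBipartite) :
    (charPoly (hairing G)).reverse = C ((-1) ^ Nat.card V) * charPoly (hairing G) := by
  classical
  have := Fintype.ofFinite V
  obtain ⟨D, hD, hA⟩ := hG.exists_conj_adjMatrix_eq_neg ℤ
  rw [charPoly_hairing, reverse_charpoly, charpolyRev_fromBlocks_one_one_zero hD hA,
    Nat.card_eq_fintype_card]

end SimpleGraph

/-- For a finite tree `T` on `n` vertices: `H(T)` is palindromic iff `n` is even,
and `H(T)` is antipalindromic iff `n` is odd. -/
theorem hairing_tree_palindromic_iff {V : Type*} [Finite V] (T : SimpleGraph V)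
    (hT : T.IsTree) :
    (IsPalindromic (hairing T) ↔ Even (Nat.card V)) ∧
      (IsAntipalindromic (hairing T) ↔ Odd (Nat.card V)) := by
  have hrev := hT.isBipartite.reverse_charPoly_hairing
  have hmonic := (hairing T).charPoly_monic
  unfold IsPalindromic IsAntipalindromic
  rw [← (hairing T).natDegree_charPoly]
  exact ⟨hmonic.palindromic_iff_even_of_reverse_eq (by decide) hrev,
    hmonic.antipalindromic_iff_odd_of_reverse_eq (by decide) hrev⟩
end

section
/- A finite tree T is antipalindromic if and only if T is isomorphic to the hairing H(S) of some finite tree S with an odd number of vertices. -/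
open Polynomial

/-!
For a forest, only permutations moving every vertex along an edge contribute to the determinant
expansion of the characteristic polynomial, and these are exactly the matchings; so the
coefficient of `X ^ j` is `±` the number of matchings leaving `j` vertices unmatched. In the
hairing of `S`, toggling at every stem not matched to another stem between "stem matched to its
hair" and "both unmatched" turns `j` unmatched vertices into `2 |S| - j`, which gives the
antipalindromy when `|S|` is odd.

Conversely, comparing the extreme coefficients of an antipalindromic tree on `n` vertices shows
that `n / 2` is odd, that the tree has a unique perfect matching `M`, and that it has exactly as
many near-perfect matchings as edges. Every edge yields a near-perfect matching by deleting from
`M` the edges it meets and adding it if it is not in `M`; this is injective. If both ends `x`, `y`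
of an edge of `M` had further neighbours `a`, `b`, the same construction applied to `{xa, yb}`
would give either a second perfect matching or a near-perfect matching outside the image. So
every edge of `M` has a leaf, and the tree is the hairing of the subtree spanned by the other
ends.
-/

open Finset Function

namespace SimpleGraph

section Matchings

variable {V : Type*} [Fintype V] [DecidableEq V]

/-- Matchings of `G`, encoded as involutions moving every vertex to a neighbour or fixing it:
the fixed points are the unmatched vertices. -/
def IsMatchingPerm (G : SimpleGraph V) (σ : Equiv.Perm V) : Prop :=
  Involutive σ ∧ ∀ x, σ x ≠ x → G.Adj x (σ x)

instance (G : SimpleGraph V) [DecidableRel G.Adj] : DecidablePred G.IsMatchingPerm :=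
  fun σ => inferInstanceAs (Decidable ((∀ x, σ (σ x) = x) ∧ _))

def matchingCount (G : SimpleGraph V) [DecidableRel G.Adj] (j : ℕ) : ℕ :=
  #{σ : Equiv.Perm V | G.IsMatchingPerm σ ∧ #{x | σ x = x} = j}

theorem _root_.Equiv.Perm.card_fixed_add_card_support (σ : Equiv.Perm V) :
    #{x | σ x = x} + #σ.support = Fintype.card V := by
  rw [Equiv.Perm.support, card_filter_add_card_filter_not, card_univ]

theorem _root_.Equiv.Perm.sign_of_involutive {σ : Equiv.Perm V} (hσ : Involutive σ) :
    Equiv.Perm.sign σ = (-1) ^ ((Fintype.card V - #{x | σ x = x}) / 2) := by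
  rw [Equiv.Perm.sign_of_pow_two_eq_one (by ext x; simp [sq, hσ x]), Fintype.card_ofFinset]
  rfl

variable {G : SimpleGraph V} [DecidableRel G.Adj]

theorem even_card_sub_of_matchingCount_ne_zero {j : ℕ} (h : G.matchingCount j ≠ 0) :
    Even (Fintype.card V - j) := by
  obtain ⟨σ, hσ⟩ := card_ne_zero.mp h
  obtain ⟨hM, rfl⟩ := (mem_filter.mp hσ).2
  rw [← σ.card_fixed_add_card_support, Nat.add_sub_cancel_left, even_iff_two_dvd]
  exact Equiv.Perm.two_dvd_card_support (by ext x; simp [sq, hM.1 x])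

theorem matchingCount_card : G.matchingCount (Fintype.card V) = 1 := by
  refine card_eq_one.mpr ⟨1, eq_singleton_iff_unique_mem.mpr ⟨?_, fun σ hσ => ?_⟩⟩
  · exact mem_filter.mpr ⟨mem_univ _, ⟨fun _ => rfl, fun x h => absurd rfl h⟩, by simp⟩
  · have := (card_eq_iff_eq_univ _).mp (mem_filter.mp hσ).2.2
    ext x
    simpa using filter_eq_self.mp this x (mem_univ x)

theorem existsUnique_of_matchingCount_zero_eq_one (h : G.matchingCount 0 = 1) :
    ∃! σ, G.IsMatchingPerm σ ∧ ∀ x, σ x ≠ x := by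
  obtain ⟨σ, hσ⟩ := card_eq_one.mp h
  have key (τ : Equiv.Perm V) : (G.IsMatchingPerm τ ∧ ∀ x, τ x ≠ x) ↔ τ = σ := by
    rw [← mem_singleton, ← hσ]
    simp [filter_eq_empty_iff]
  exact ⟨σ, (key σ).mpr rfl, fun τ hτ => (key τ).mp hτ⟩

end Matchings

section Forest

variable {V : Type*} {G : SimpleGraph V}

theorem IsAcyclic.not_adj_of_adj_of_adj (hG : G.IsAcyclic) {x y z : V} (hxy : G.Adj x y)
    (hyz : G.Adj y z) : ¬G.Adj x z := fun hxz => by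
  have := isBridge_iff_forall_walk_mem_edges.mp (isAcyclic_iff_forall_adj_isBridge.mp hG hxz)
    (.cons hxy (.cons hyz .nil))
  simp only [Walk.edges_cons, Walk.edges_nil, List.mem_cons, List.not_mem_nil, or_false,
    Sym2.eq_iff] at this
  have hxy' := hxy.ne
  have hyz' := hyz.ne
  grind

theorem exists_walk_iterate {f : V → V} {i : V} (hf : ∀ t, G.Adj (f^[t] i) (f^[t + 1] i))
    (m : ℕ) : ∃ p : G.Walk (f i) (f^[m + 1] i),
      ∀ e ∈ p.edges, ∃ t, 1 ≤ t ∧ t ≤ m ∧ e = s(f^[t] i, f^[t + 1] i) := by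
  induction m with
  | zero => exact ⟨.nil, by simp⟩
  | succ m ih =>
    obtain ⟨p, hp⟩ := ih
    refine ⟨p.concat (hf (m + 1)), fun e he => ?_⟩
    rw [Walk.edges_concat, List.concat_eq_append, List.mem_append, List.mem_singleton] at he
    rcases he with he | rfl
    · obtain ⟨t, h1, h2, rfl⟩ := hp e he
      exact ⟨t, h1, by omega, rfl⟩
    · exact ⟨m + 1, by omega, le_rfl, rfl⟩

theorem IsAcyclic.involutive_of_forall_adj [Finite V] (hG : G.IsAcyclic) {σ : Equiv.Perm V}
    (hσ : ∀ x, σ x ≠ x → G.Adj x (σ x)) : Involutive σ := by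
  intro i
  by_contra hii
  have hi : σ i ≠ i := fun h => hii (by rw [h, h])
  have hstep (t : ℕ) : G.Adj (σ^[t] i) (σ^[t + 1] i) := by
    rw [iterate_succ_apply']
    refine hσ _ fun h => hi (σ.injective.iterate t ?_)
    rwa [← iterate_succ_apply, iterate_succ_apply']
  -- The orbit of `i` is a walk from `σ i` back to `i`; it has to use the bridge `s(σ i, i)`,
  -- which is impossible when the period of `i` exceeds `2`.
  set k := minimalPeriod σ i
  have hk : 0 < k := minimalPeriod_pos_of_mem_periodicPts (σ.injective.mem_periodicPts i)
  obtain ⟨p, hp⟩ := exists_walk_iterate hstep (k - 1)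
  have hend : σ^[k - 1 + 1] i = i := by rw [Nat.sub_add_cancel hk, iterate_minimalPeriod]
  have hmem := isBridge_iff_forall_walk_mem_edges.mp
    (isAcyclic_iff_forall_adj_isBridge.mp hG (hσ i hi).symm) (p.copy rfl hend)
  rw [Walk.edges_copy] at hmem
  obtain ⟨t, ht1, htk, he⟩ := hp _ hmem
  rcases Sym2.eq_iff.mp he with ⟨h1, h2⟩ | ⟨-, h2⟩
  · exact hii (by rw [h1, ← iterate_succ_apply' σ, ← h2])
  · exact absurd (IsPeriodicPt.minimalPeriod_le (by omega) h2.symm) (by omega)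

variable [Fintype V] [DecidableEq V] [DecidableRel G.Adj]

theorem prod_charmatrix_adjMatrix_of_isMatchingPerm {σ : Equiv.Perm V}
    (hσ : G.IsMatchingPerm σ) :
    ∏ i, (G.adjMatrix ℤ).charmatrix (σ i) i = X ^ #{x | σ x = x} := by
  rw [← prod_filter_mul_prod_filter_not univ (fun x => σ x = x)]
  have hfixed : ∏ i with σ i = i, (G.adjMatrix ℤ).charmatrix (σ i) i = X ^ #{x | σ x = x} := by
    rw [prod_congr rfl (g := fun _ => X), prod_const]
    intro x hx
    rw [(mem_filter.mp hx).2, Matrix.charmatrix_apply_eq]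
    simp
  have hmoved : ∏ i with ¬σ i = i, (G.adjMatrix ℤ).charmatrix (σ i) i = 1 := by
    rw [prod_congr rfl (g := fun _ => -1), prod_const]
    · obtain ⟨c, hc⟩ := Equiv.Perm.two_dvd_card_support (σ := σ) (by ext x; simp [sq, hσ.1 x])
      have : #{x | ¬σ x = x} = #σ.support := by simp [Equiv.Perm.support]
      simp [this, hc, pow_mul]
    · intro x hx
      have hx := (mem_filter.mp hx).2
      rw [Matrix.charmatrix_apply_ne _ _ _ hx, adjMatrix_apply, if_pos (hσ.2 x hx).symm]
      simp
  rw [hfixed, hmoved, mul_one]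

theorem IsAcyclic.charpoly_adjMatrix_eq_sum (hG : G.IsAcyclic) :
    (G.adjMatrix ℤ).charpoly =
      ∑ σ : Equiv.Perm V with G.IsMatchingPerm σ, Equiv.Perm.sign σ • X ^ #{x | σ x = x} := by
  rw [Matrix.charpoly, Matrix.det_apply, ← sum_filter_add_sum_filter_not univ G.IsMatchingPerm,
    sum_eq_zero (s := {σ | ¬G.IsMatchingPerm σ}), add_zero]
  · exact sum_congr rfl fun σ hσ => by
      rw [prod_charmatrix_adjMatrix_of_isMatchingPerm (mem_filter.mp hσ).2]
  · intro σ hσ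
    obtain ⟨x, hx, hnadj⟩ : ∃ x, σ x ≠ x ∧ ¬G.Adj x (σ x) := by
      by_contra! h
      exact (mem_filter.mp hσ).2 ⟨hG.involutive_of_forall_adj h, h⟩
    rw [prod_eq_zero (mem_univ x), smul_zero]
    rw [Matrix.charmatrix_apply_ne _ _ _ hx, adjMatrix_apply, if_neg fun h => hnadj h.symm]
    simp

theorem IsAcyclic.coeff_charpoly_adjMatrix (hG : G.IsAcyclic) (j : ℕ) :
    (G.adjMatrix ℤ).charpoly.coeff j =
      (-1) ^ ((Fintype.card V - j) / 2) * G.matchingCount j := by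
  rw [hG.charpoly_adjMatrix_eq_sum, finsetSum_coeff, matchingCount, ← filter_filter,
    natCast_card_filter, mul_sum]
  refine sum_congr rfl fun σ hσ => ?_
  rw [Units.smul_def, coeff_smul, coeff_X_pow]
  by_cases h : #{x | σ x = x} = j
  · simp [Equiv.Perm.sign_of_involutive (mem_filter.mp hσ).2.1, h]
  · simp [h, Ne.symm h]

end Forest

end SimpleGraph

open SimpleGraph

theorem charPoly_eq_charpoly_adjMatrix {V : Type*} [Fintype V] [DecidableEq V]
    (G : SimpleGraph V) [DecidableRel G.Adj] : charPoly G = (G.adjMatrix ℤ).charpoly := by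
  unfold charPoly
  congr!

theorem SimpleGraph.Iso.charPoly_eq {V W : Type*} [Finite V] [Finite W] {G : SimpleGraph V}
    {H : SimpleGraph W} (e : G ≃g H) : charPoly G = charPoly H := by
  classical
  have := Fintype.ofFinite V
  have := Fintype.ofFinite W
  rw [charPoly_eq_charpoly_adjMatrix, charPoly_eq_charpoly_adjMatrix,
    ← Matrix.charpoly_reindex e.toEquiv]
  congr
  ext i j
  simp [adjMatrix_apply, ← e.symm.map_adj_iff]
  congr!

theorem SimpleGraph.Iso.isAntipalindromic_iff {V W : Type*} [Finite V] [Finite W]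
    {G : SimpleGraph V} {H : SimpleGraph W} (e : G ≃g H) :
    IsAntipalindromic G ↔ IsAntipalindromic H := by
  rw [IsAntipalindromic, IsAntipalindromic, e.charPoly_eq, Nat.card_congr e.toEquiv]

namespace SimpleGraph

section Hairing

variable {W : Type*} {S : SimpleGraph W}

instance [DecidableEq W] [DecidableRel S.Adj] : DecidableRel (hairing S).Adj :=
  fun _ _ => inferInstanceAs (Decidable (_ ∨ _))

theorem IsMatchingPerm.hairing_cases {σ : Equiv.Perm (W × Bool)}
    (hσ : (hairing S).IsMatchingPerm σ) (s : W) :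
    σ (s, false) = (s, false) ∧ σ (s, true) = (s, true) ∨
    σ (s, false) = (s, true) ∧ σ (s, true) = (s, false) ∨
    ∃ t, S.Adj s t ∧ σ (s, false) = (t, false) ∧ σ (s, true) = (s, true) := by
  have h1 := hσ.2 (s, false)
  have h2 := hσ.2 (s, true)
  have h3 := hσ.1 (s, false)
  have h4 := hσ.1 (s, true)
  simp only [hairing] at h1 h2
  grind

variable [DecidableEq W]

/-- On matchings of `hairing S`: toggles, at every stem not matched to another stem, between the
stem being matched to its hair and both being unmatched. -/
def hairingFlip (σ : Equiv.Perm (W × Bool)) : Equiv.Perm (W × Bool) :=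
  σ * Involutive.toPerm (fun p => if (σ (p.1, false)).1 = p.1 then (p.1, !p.2) else p)
    (fun p => by dsimp only; split_ifs <;> simp_all)

theorem hairingFlip_apply (σ : Equiv.Perm (W × Bool)) (s : W) (b : Bool) :
    hairingFlip σ (s, b) = if (σ (s, false)).1 = s then σ (s, !b) else σ (s, b) := by
  by_cases h : (σ (s, false)).1 = s <;> simp [hairingFlip, Involutive.toPerm, h]

variable {σ : Equiv.Perm (W × Bool)}

theorem isMatchingPerm_hairingFlip (hσ : (hairing S).IsMatchingPerm σ) :
    (hairing S).IsMatchingPerm (hairingFlip σ) := by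
  refine ⟨fun ⟨s, b⟩ => ?_, fun ⟨s, b⟩ => ?_⟩
  all_goals rcases hσ.hairing_cases s with ⟨h1, h2⟩ | ⟨h1, h2⟩ | ⟨t, hst, h1, h2⟩
  · cases b <;> simp [hairingFlip_apply, h1, h2]
  · cases b <;> simp [hairingFlip_apply, h1, h2]
  · have h3 : σ (t, false) = (s, false) := by rw [← h1, hσ.1]
    cases b <;> simp [hairingFlip_apply, h1, h2, h3, hst.ne, hst.ne.symm]
  · cases b <;> simp [hairingFlip_apply, h1, h2, hairing]
  · cases b <;> simp [hairingFlip_apply, h1, h2, hairing]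
  · cases b <;> simp [hairingFlip_apply, h1, h2, hst.ne.symm, hairing, hst]

theorem hairingFlip_hairingFlip (hσ : (hairing S).IsMatchingPerm σ) :
    hairingFlip (hairingFlip σ) = σ := by
  ext ⟨s, b⟩ : 1
  rcases hσ.hairing_cases s with ⟨h1, h2⟩ | ⟨h1, h2⟩ | ⟨t, hst, h1, h2⟩
  · cases b <;> simp [hairingFlip_apply, h1, h2]
  · cases b <;> simp [hairingFlip_apply, h1, h2]
  · cases b <;> simp [hairingFlip_apply, h1, h2, hst.ne.symm]

theorem card_fixed_hairingFlip_add [Fintype W] (hσ : (hairing S).IsMatchingPerm σ) :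
    #{p | hairingFlip σ p = p} + #{p | σ p = p} = 2 * Fintype.card W := by
  simp only [card_filter, Fintype.sum_prod_type, Fintype.sum_bool]
  rw [← sum_add_distrib, mul_comm, ← card_univ, ← smul_eq_mul, ← sum_const]
  refine sum_congr rfl fun s _ => ?_
  rcases hσ.hairing_cases s with ⟨h1, h2⟩ | ⟨h1, h2⟩ | ⟨t, hst, h1, h2⟩
  · simp [hairingFlip_apply, h1, h2]
  · simp [hairingFlip_apply, h1, h2]
  · simp [hairingFlip_apply, h1, h2, hst.ne.symm]

theorem matchingCount_hairing [Fintype W] [DecidableRel S.Adj] {j : ℕ}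
    (hj : j ≤ 2 * Fintype.card W) :
    (hairing S).matchingCount j = (hairing S).matchingCount (2 * Fintype.card W - j) := by
  refine card_nbij' hairingFlip hairingFlip ?_ ?_
    (fun σ hσ => hairingFlip_hairingFlip (mem_filter.mp hσ).2.1)
    (fun σ hσ => hairingFlip_hairingFlip (mem_filter.mp hσ).2.1)
  all_goals
    intro σ hσ
    simp only [coe_filter, Set.mem_ofPred_eq, mem_univ, true_and] at hσ ⊢
    have := card_fixed_hairingFlip_add hσ.1
    exact ⟨isMatchingPerm_hairingFlip hσ.1, by omega⟩

end Hairing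

end SimpleGraph

theorem neg_one_pow_two_mul_sub_div_two {m i : ℕ} (hm : Odd m) (hi : Even (2 * m - i))
    (him : i ≤ 2 * m) : (-1 : ℤ) ^ ((2 * m - i) / 2) = -(-1) ^ (i / 2) := by
  obtain ⟨k, hk⟩ := hi
  have hsum : (2 * m - i) / 2 + i / 2 = m := by omega
  rw [← hsum] at hm
  rcases Nat.even_or_odd (i / 2) with h | h
  · rw [h.neg_one_pow, ((Nat.odd_add.mp hm).mpr h).neg_one_pow]
  · rw [h.neg_one_pow, ((Nat.odd_add'.mp hm).mp h).neg_one_pow, neg_neg]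

theorem isAntipalindromic_hairing {W : Type*} [Finite W] {S : SimpleGraph W}
    (hS : (hairing S).IsAcyclic) (hodd : Odd (Nat.card W)) : IsAntipalindromic (hairing S) := by
  classical
  have := Fintype.ofFinite W
  have hcard : Fintype.card (W × Bool) = 2 * Fintype.card W := by simp [mul_comm]
  rw [Nat.card_eq_fintype_card] at hodd
  intro i hi
  rw [Nat.card_eq_fintype_card, hcard] at hi ⊢
  rw [charPoly_eq_charpoly_adjMatrix, hS.coeff_charpoly_adjMatrix, hS.coeff_charpoly_adjMatrix,
    hcard, Nat.sub_sub_self hi, ← matchingCount_hairing hi]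
  by_cases h : (hairing S).matchingCount i = 0
  · simp [h]
  · have he := even_card_sub_of_matchingCount_ne_zero h
    rw [hcard] at he
    rw [neg_one_pow_two_mul_sub_div_two hodd he hi]
    ring

namespace SimpleGraph

section Rematch

variable {V : Type*} [DecidableEq V]

/-- The matching obtained from `σ₀` by deleting the edges that meet an edge of `σ` and adding the
edges of `σ` that are not in `σ₀`. -/
def rematch (σ₀ σ : Equiv.Perm V) (h₀ : Involutive σ₀) (h : Involutive σ) : Equiv.Perm V :=
  Involutive.toPerm
    (fun w => if σ w ≠ w then (if σ w = σ₀ w then w else σ w)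
      else if σ (σ₀ w) ≠ σ₀ w then w else σ₀ w)
    (fun w => by dsimp only; grind [Involutive])

theorem rematch_apply (σ₀ σ : Equiv.Perm V) (h₀ : Involutive σ₀) (h : Involutive σ) (w : V) :
    rematch σ₀ σ h₀ h w = if σ w ≠ w then (if σ w = σ₀ w then w else σ w)
      else if σ (σ₀ w) ≠ σ₀ w then w else σ₀ w := rfl

theorem isMatchingPerm_rematch {G : SimpleGraph V} {σ₀ σ : Equiv.Perm V}
    (h₀ : G.IsMatchingPerm σ₀) (h : G.IsMatchingPerm σ) :
    G.IsMatchingPerm (rematch σ₀ σ h₀.1 h.1) := by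
  refine ⟨Involutive.toPerm_involutive _, fun w hw => ?_⟩
  rw [rematch_apply] at hw ⊢
  split_ifs at hw ⊢ with h1
  · exact absurd rfl hw
  · exact h.2 w h1
  · exact absurd rfl hw
  · exact h₀.2 w hw

theorem rematch_injective {σ₀ σ τ : Equiv.Perm V} (h₀ : Involutive σ₀) (hfree : ∀ w, σ₀ w ≠ w)
    (hσ : Involutive σ) (hτ : Involutive τ) (h : rematch σ₀ σ h₀ hσ = rematch σ₀ τ h₀ hτ) :
    σ = τ := by
  -- The edges of `ρ` are the new edges of `N = rematch σ₀ ρ` together with the edges of `σ₀`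
  -- whose ends are both left unmatched by `N`.
  have key (ρ : Equiv.Perm V) (hρ : Involutive ρ) (w : V) : ρ w =
      let N := rematch σ₀ ρ h₀ hρ
      if N w ≠ σ₀ w ∧ N w ≠ w then N w else if N w = w ∧ N (σ₀ w) = σ₀ w then σ₀ w else w := by
    simp only [rematch_apply]
    grind [Involutive]
  ext w
  rw [key σ hσ, key τ hτ, h]

theorem isMatchingPerm_swap_mul_swap {G : SimpleGraph V} {x a y b : V} (hxa : G.Adj x a) (hyb : G.Adj y b)
    (hxy : x ≠ y) (hay : a ≠ y) (hbx : b ≠ x) (hab : a ≠ b) :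
    G.IsMatchingPerm (Equiv.swap x a * Equiv.swap y b) := by
  have hxa' := hxa.ne
  have hyb' := hyb.ne
  refine ⟨fun w => ?_, fun w hw => ?_⟩
  · simp only [Equiv.Perm.mul_apply, Equiv.swap_apply_def]
    grind
  · simp only [Equiv.Perm.mul_apply, Equiv.swap_apply_def] at hw ⊢
    split_ifs at hw ⊢ <;> grind [Adj.symm]

variable [Fintype V]

theorem card_fixed_rematch_swap {σ₀ : Equiv.Perm V} (h₀ : Involutive σ₀)
    (hfree : ∀ w, σ₀ w ≠ w) {u v : V} (huv : u ≠ v) (hswap : Involutive (Equiv.swap u v)) :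
    #{w | rematch σ₀ (Equiv.swap u v) h₀ hswap w = w} = 2 := by
  by_cases hm : σ₀ u = v
  · have : ({w | rematch σ₀ (Equiv.swap u v) h₀ hswap w = w} : Finset V) = {u, v} := by
      ext w
      simp only [mem_insert, mem_singleton, rematch_apply, Equiv.swap_apply_def]
      grind [Involutive]
    rw [this, card_pair huv]
  · have : ({w | rematch σ₀ (Equiv.swap u v) h₀ hswap w = w} : Finset V) = {σ₀ u, σ₀ v} := by
      ext w
      simp only [mem_insert, mem_singleton, rematch_apply, Equiv.swap_apply_def]
      grind [Involutive]
    rw [this, card_pair (σ₀.injective.ne huv)]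

theorem filter_rematch_ne_subset_support {σ₀ σ : Equiv.Perm V} (h₀ : Involutive σ₀)
    (hσ : Involutive σ) :
    ({w | rematch σ₀ σ h₀ hσ w ≠ σ₀ w ∧ rematch σ₀ σ h₀ hσ w ≠ w} : Finset V) ⊆ σ.support := by
  intro w
  simp only [Equiv.Perm.mem_support, rematch_apply]
  grind

variable {G : SimpleGraph V} [DecidableRel G.Adj]

theorem matchingCount_sub_two_lt {σ₀ N : Equiv.Perm V} (h₀ : G.IsMatchingPerm σ₀)
    (hfree : ∀ w, σ₀ w ≠ w) (hN : G.IsMatchingPerm N) (hNfix : #{w | N w = w} = 2)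
    (hNnew : 2 < #{w | N w ≠ σ₀ w ∧ N w ≠ w}) :
    G.matchingCount (Fintype.card V - 2) < G.matchingCount 2 := by
  have hcard : 2 ≤ Fintype.card V := hNfix ▸ card_le_univ _
  let F := {σ : Equiv.Perm V // G.IsMatchingPerm σ ∧ #{x | σ x = x} = Fintype.card V - 2}
  let A := {σ : Equiv.Perm V // G.IsMatchingPerm σ ∧ #{x | σ x = x} = 2}
  have hswap (σ : F) : ∃ u v, u ≠ v ∧ σ.1 = Equiv.swap u v := by
    have := σ.1.card_fixed_add_card_support
    exact Equiv.Perm.card_support_eq_two.mp (by omega)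
  let f (σ : F) : A := ⟨rematch σ₀ σ.1 h₀.1 σ.2.1.1, isMatchingPerm_rematch h₀ σ.2.1, by
    obtain ⟨σ, hσ⟩ := σ
    obtain ⟨u, v, huv, rfl⟩ := hswap ⟨σ, hσ⟩
    exact card_fixed_rematch_swap h₀.1 hfree huv _⟩
  have hf : Injective f := fun σ τ h =>
    Subtype.ext (rematch_injective h₀.1 hfree σ.2.1.1 τ.2.1.1 (congrArg Subtype.val h))
  have hNf : ⟨N, hN, hNfix⟩ ∉ Set.range f := by
    rintro ⟨σ, hσ⟩
    have hsub := card_le_card (filter_rematch_ne_subset_support h₀.1 σ.2.1.1)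
    have := σ.1.card_fixed_add_card_support
    rw [show rematch σ₀ σ.1 h₀.1 σ.2.1.1 = N from congrArg Subtype.val hσ] at hsub
    omega
  simpa [matchingCount, F, A, Fintype.card_subtype] using
    Fintype.card_lt_of_injective_of_notMem f hf hNf

theorem IsAcyclic.forall_adj_eq_or_forall_adj_eq (hG : G.IsAcyclic) {σ₀ : Equiv.Perm V}
    (h₀ : G.IsMatchingPerm σ₀) (hfree : ∀ w, σ₀ w ≠ w)
    (huniq : ∀ τ, G.IsMatchingPerm τ → (∀ w, τ w ≠ w) → τ = σ₀)
    (hcount : G.matchingCount 2 = G.matchingCount (Fintype.card V - 2)) (x : V) :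
    (∀ z, G.Adj x z → z = σ₀ x) ∨ ∀ z, G.Adj (σ₀ x) z → z = x := by
  by_contra! h
  obtain ⟨⟨a, hxa, hay⟩, ⟨b, hyb, hbx⟩⟩ := h
  have hxy : G.Adj x (σ₀ x) := h₀.2 x (hfree x)
  have hab : a ≠ b := by
    rintro rfl
    exact hG.not_adj_of_adj_of_adj hxa hyb.symm hxy
  have hρ := isMatchingPerm_swap_mul_swap hxa hyb hxy.ne hay hbx hab
  set N := rematch σ₀ _ h₀.1 hρ.1
  have hN := isMatchingPerm_rematch h₀ hρ
  have hinv := h₀.1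
  have hxa' := hxa.ne
  have hyb' := hyb.ne
  by_cases hm : σ₀ a = b
  · refine hay ?_
    have hNfree : ∀ w, N w ≠ w := by
      intro w
      simp only [N, rematch_apply, Equiv.Perm.mul_apply, Equiv.swap_apply_def]
      grind [Involutive]
    rw [← huniq N hN hNfree]
    simp only [N, rematch_apply, Equiv.Perm.mul_apply, Equiv.swap_apply_def]
    grind
  · have hfix : ({w | N w = w} : Finset V) = {σ₀ a, σ₀ b} := by
      ext w
      simp only [N, mem_insert, mem_singleton, rematch_apply, Equiv.Perm.mul_apply,
        Equiv.swap_apply_def]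
      grind [Involutive]
    have hnew : ({w | N w ≠ σ₀ w ∧ N w ≠ w} : Finset V) = {x, a, σ₀ x, b} := by
      ext w
      simp only [N, mem_insert, mem_singleton, rematch_apply, Equiv.Perm.mul_apply,
        Equiv.swap_apply_def]
      grind [Involutive]
    have h2 : #{w | N w = w} = 2 := by rw [hfix, card_pair (σ₀.injective.ne hab)]
    have h4 : #{w | N w ≠ σ₀ w ∧ N w ≠ w} = 4 := by
      rw [hnew, card_insert_of_notMem, card_insert_of_notMem, card_pair] <;> grind
    exact (matchingCount_sub_two_lt h₀ hfree hN h2 (by rw [h4]; norm_num)).ne' hcount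

end Rematch

theorem IsAcyclic.matchingCount_of_isAntipalindromic {V : Type*} [Fintype V] [DecidableEq V]
    {G : SimpleGraph V} [DecidableRel G.Adj] (hG : G.IsAcyclic)
    (hA : IsAntipalindromic G) :
    Odd (Fintype.card V / 2) ∧ G.matchingCount 0 = 1 ∧
      G.matchingCount 2 = G.matchingCount (Fintype.card V - 2) := by
  set n := Fintype.card V
  have hcoeff (i : ℕ) (hi : i ≤ n) : (-1 : ℤ) ^ ((n - i) / 2) * G.matchingCount i =
      -((-1) ^ (i / 2) * G.matchingCount (n - i)) := by
    have := hA i (by rwa [Nat.card_eq_fintype_card])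
    rwa [Nat.card_eq_fintype_card, charPoly_eq_charpoly_adjMatrix, hG.coeff_charpoly_adjMatrix,
      hG.coeff_charpoly_adjMatrix, Nat.sub_sub_self hi] at this
  have h0 := hcoeff 0 (Nat.zero_le n)
  rw [Nat.sub_zero, matchingCount_card] at h0
  have hc0 : G.matchingCount 0 ≠ 0 := fun h => by simp [h] at h0
  have hn : Even n := by simpa using even_card_sub_of_matchingCount_ne_zero hc0
  have hodd : Odd (n / 2) ∧ G.matchingCount 0 = 1 := by
    rcases Nat.even_or_odd (n / 2) with h | h
    · rw [h.neg_one_pow] at h0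
      omega
    · rw [h.neg_one_pow] at h0
      exact ⟨h, by omega⟩
  obtain ⟨k, hk⟩ := hodd.1
  have h2 := hcoeff 2 (by omega)
  rw [(show Even ((n - 2) / 2) from ⟨k, by omega⟩).neg_one_pow] at h2
  exact ⟨hodd.1, hodd.2, by simpa using h2⟩

section Structure

variable {V : Type*} {G : SimpleGraph V}

theorem nonempty_iso_hairing_induce {σ₀ : Equiv.Perm V} (h₀ : Involutive σ₀)
    (hadj : ∀ x, G.Adj x (σ₀ x)) {L : Set V} (hL : ∀ x, x ∈ L ↔ σ₀ x ∉ L)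
    (hleaf : ∀ x ∈ L, ∀ z, G.Adj x z → z = σ₀ x) :
    Nonempty (G ≃g hairing (G.induce Lᶜ)) := by
  classical
  refine ⟨⟨⟨fun x => if hx : x ∈ L then (⟨σ₀ x, (hL x).mp hx⟩, true) else (⟨x, hx⟩, false),
    fun p => if p.2 then σ₀ p.1 else p.1, fun x => ?_, fun ⟨⟨s, hs⟩, b⟩ => ?_⟩, ?_⟩⟩
  · by_cases hx : x ∈ L <;> simp [hx, h₀ x]
  · cases b
    · simp [show s ∉ L from hs]
    · have : σ₀ s ∈ L := by rw [hL, h₀ s]; exact hs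
      simp [this, h₀ s]
  · intro x y
    by_cases hx : x ∈ L <;> by_cases hy : y ∈ L
    · simpa [hx, hy, hairing] using fun h => (hL x).mp hx (hleaf x hx y h ▸ hy)
    · simpa [hx, hy, hairing] using
        Iff.intro (fun h : σ₀ x = y => h ▸ hadj x) fun h => (hleaf x hx y h).symm
    · simpa [hx, hy, hairing] using
        Iff.intro (fun h : x = σ₀ y => h ▸ (hadj y).symm) fun h => hleaf y hy x h.symm
    · simp [hx, hy, hairing]

theorem exists_leaf_transversal (hG : G.Preconnected) {σ₀ : Equiv.Perm V} (h₀ : Involutive σ₀)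
    (hfree : ∀ x, σ₀ x ≠ x)
    (hpend : ∀ x, (∀ z, G.Adj x z → z = σ₀ x) ∨ ∀ z, G.Adj (σ₀ x) z → z = x) :
    ∃ L : Set V, (∀ x, x ∈ L ↔ σ₀ x ∉ L) ∧ ∀ x ∈ L, ∀ z, G.Adj x z → z = σ₀ x := by
  by_cases hK2 : ∃ x, (∀ z, G.Adj x z → z = σ₀ x) ∧ ∀ z, G.Adj (σ₀ x) z → z = x
  · obtain ⟨x, hx, hsx⟩ := hK2
    have hall (z : V) : z = x ∨ z = σ₀ x := by
      induction (reachable_iff_reflTransGen x z).mp (hG x z) with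
      | refl => exact .inl rfl
      | tail _ h ih => rcases ih with rfl | rfl; exacts [.inr (hx _ h), .inl (hsx _ h)]
    refine ⟨{x}, fun y => ?_, fun y hy => hy ▸ hx⟩
    rcases hall y with rfl | rfl
    · simp [hfree y]
    · simpa [h₀ x] using hfree x
  · push Not at hK2
    refine ⟨{x | ∀ z, G.Adj x z → z = σ₀ x}, fun x => ?_, fun x hx => hx⟩
    simp only [Set.mem_ofPred_eq, h₀ x]
    exact ⟨fun h h' => by obtain ⟨z, hz, hne⟩ := hK2 x h; exact hne (h' z hz),
      (hpend x).resolve_right⟩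

end Structure

def Iso.hairing {W W' : Type*} {S : SimpleGraph W} {S' : SimpleGraph W'} (e : S ≃g S') :
    _root_.hairing S ≃g _root_.hairing S' where
  toEquiv := e.toEquiv.prodCongr (Equiv.refl Bool)
  map_rel_iff' := by simp [_root_.hairing, e.map_adj_iff]

theorem reachable_fst_of_reachable_hairing {W : Type*} {S : SimpleGraph W} {p q : W × Bool}
    (h : (hairing S).Reachable p q) : S.Reachable p.1 q.1 := by
  obtain ⟨w⟩ := h
  induction w with
  | nil => rfl
  | cons h _ ih =>
    rcases h with ⟨-, -, h⟩ | ⟨h, -⟩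
    · exact h.reachable.trans ih
    · exact h ▸ ih

theorem isTree_of_isTree_hairing {W : Type*} {S : SimpleGraph W} (h : (hairing S).IsTree) :
    S.IsTree := by
  have : Nonempty W := ⟨h.1.nonempty.some.1⟩
  refine ⟨⟨fun s t => reachable_fst_of_reachable_hairing (h.1.preconnected (s, false) (t, false))⟩,
    ?_⟩
  exact h.isAcyclic.comap ⟨fun s => (s, false), fun h => Or.inl ⟨rfl, rfl, h⟩⟩
    fun _ _ h => (Prod.ext_iff.mp h).1

theorem exists_isTree_iso_hairing {V U : Type*} [Finite V] [Finite U] {T : SimpleGraph V}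
    (hT : T.IsTree) {S₀ : SimpleGraph U} (e : T ≃g hairing S₀) :
    ∃ (W : Type) (_ : Finite W) (S : SimpleGraph W),
      S.IsTree ∧ Nat.card V = 2 * Nat.card W ∧ Nonempty (T ≃g hairing S) := by
  have := Fintype.ofFinite U
  let e' := e.trans (S₀.overFinIso rfl).hairing
  refine ⟨_, inferInstance, _, isTree_of_isTree_hairing ((Iso.isTree_iff e').mp hT), ?_, ⟨e'⟩⟩
  rw [Nat.card_congr e'.toEquiv]
  simp [mul_comm]

end SimpleGraph

/-- A finite tree is antipalindromic iff it is isomorphic to the hairing of some finite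
tree with an odd number of vertices. -/
theorem tree_antipalindromic_iff_hairing {V : Type*} [Finite V] (T : SimpleGraph V)
    (hT : T.IsTree) :
    IsAntipalindromic T ↔
      ∃ (W : Type) (_ : Finite W) (S : SimpleGraph W),
        S.IsTree ∧ Odd (Nat.card W) ∧ Nonempty (T ≃g hairing S) := by
  classical
  have := Fintype.ofFinite V
  constructor
  · intro hA
    obtain ⟨hodd, hc0, hc2⟩ := hT.isAcyclic.matchingCount_of_isAntipalindromic hA
    obtain ⟨σ₀, ⟨h₀, hfree⟩, huniq⟩ := existsUnique_of_matchingCount_zero_eq_one hc0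
    have hpend := hT.isAcyclic.forall_adj_eq_or_forall_adj_eq h₀ hfree
      (fun τ h1 h2 => huniq τ ⟨h1, h2⟩) hc2
    obtain ⟨L, hL, hleaf⟩ := exists_leaf_transversal hT.connected.preconnected h₀.1 hfree hpend
    obtain ⟨e⟩ := nonempty_iso_hairing_induce h₀.1 (fun x => h₀.2 x (hfree x)) hL hleaf
    obtain ⟨W, hW, S, hS, hcard, he⟩ := exists_isTree_iso_hairing hT e
    refine ⟨W, hW, S, hS, ?_, he⟩
    rwa [← Nat.card_eq_fintype_card, hcard, Nat.mul_div_cancel_left _ two_pos] at hodd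
  · rintro ⟨W, _, S, -, hodd, ⟨e⟩⟩
    exact e.isAntipalindromic_iff.mpr
      (isAntipalindromic_hairing (e.isAcyclic_iff.mp hT.isAcyclic) hodd)
end
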